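/- arXiv:2106.13430 — 4 statements merged into one kernel-verified Lean document; each statement's English description precedes it below -/
import Mathlib

section
/- Let μ be the standard Gaussian measure N(0,1) on ℝ and let ρ be a real number with -1 ≤ ρ ≤ 1. Then the integral over ℝ² (with respect to the product measure μ × μ) of the function (x,y) ↦ max(x,0) · max(ρ·x + √(1 - ρ²)·y, 0) equals (√(1 - ρ²) + ρ·(π - arccos ρ))/(2π). -/
/-!
Write `ρ = cos α` and `√(1 - ρ²) = sin α` with `α = arccos ρ`. In polar coordinates `(r, θ)` the
second factor becomes `r · max (cos (θ - α)) 0` and the product density becomes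
`(2π)⁻¹ e^{-r²/2}`, so the integral splits into the radial moment `∫₀^∞ r³ e^{-r²/2} dr = 2`
times `(2π)⁻¹` times an angular integral. The integrand of the latter is supported on
`(α - π/2, π/2)`, where it is `cos θ cos (θ - α)`, giving `((π - α) cos α + sin α) / 2`.
-/

open Real MeasureTheory ProbabilityTheory Set
open scoped NNReal

lemma max_mul_zero_of_nonneg {r : ℝ} (hr : 0 ≤ r) (x : ℝ) : max (r * x) 0 = r * max x 0 := by
  rw [mul_max_of_nonneg _ _ hr, mul_zero]

lemma integral_prod_gaussianReal {E : Type*} [NormedAddCommGroup E] [NormedSpace ℝ E]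
    {μ₁ μ₂ : ℝ} {v₁ v₂ : ℝ≥0} (hv₁ : v₁ ≠ 0) (hv₂ : v₂ ≠ 0) (f : ℝ × ℝ → E) :
    ∫ p, f p ∂((gaussianReal μ₁ v₁).prod (gaussianReal μ₂ v₂))
      = ∫ p, (gaussianPDFReal μ₁ v₁ p.1 * gaussianPDFReal μ₂ v₂ p.2) • f p := by
  rw [gaussianReal_of_var_ne_zero _ hv₁, gaussianReal_of_var_ne_zero _ hv₂,
    prod_withDensity (measurable_gaussianPDF _ _) (measurable_gaussianPDF _ _),
    integral_withDensity_eq_integral_toReal_smul (by fun_prop)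
      (ae_of_all _ fun _ ↦ ENNReal.mul_lt_top gaussianPDF_lt_top gaussianPDF_lt_top),
    ← Measure.volume_eq_prod]
  simp only [ENNReal.toReal_mul, toReal_gaussianPDF]

lemma gaussianPDFReal_zero_one_mul (x y : ℝ) :
    gaussianPDFReal 0 1 x * gaussianPDFReal 0 1 y = (2 * π)⁻¹ * exp (-(x ^ 2 + y ^ 2) / 2) := by
  have h2π : √(2 * π) * √(2 * π) = 2 * π := mul_self_sqrt (by positivity)
  simp only [gaussianPDFReal, NNReal.coe_one, mul_one, sub_zero]
  rw [mul_mul_mul_comm, ← mul_inv, h2π, ← exp_add]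
  ring_nf

lemma integral_Ioi_pow_three_mul_exp_neg_sq_div_two :
    ∫ r in Ioi (0 : ℝ), r ^ 3 * exp (-r ^ 2 / 2) = 2 := by
  have h := integral_rpow_mul_exp_neg_mul_rpow (p := 2) (q := 3) (b := 1 / 2)
    (by norm_num) (by norm_num) (by norm_num)
  norm_num at h
  refine Eq.trans ?_ h
  congr 1 with r
  ring_nf

lemma integral_cos_mul_cos_sub (a b α : ℝ) :
    ∫ θ in a..b, cos θ * cos (θ - α)
      = (b - a) * cos α / 2 + (sin (2 * b - α) - sin (2 * a - α)) / 4 := by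
  have hF : ∀ θ, HasDerivAt (fun t ↦ t * cos α / 2 + sin (2 * t - α) / 4)
      (cos θ * cos (θ - α)) θ := by
    intro θ
    refine (((hasDerivAt_id' θ).mul_const (cos α)).div_const 2).add
      ((((hasDerivAt_id' θ).const_mul 2).sub_const α).sin.div_const 4) |>.congr_deriv ?_
    rw [show 2 * θ - α = θ + (θ - α) by ring, cos_add, cos_sub, sin_sub]
    linear_combination -(cos α / 2) * sin_sq_add_cos_sq θ
  rw [intervalIntegral.integral_eq_sub_of_hasDerivAt (fun θ _ ↦ hF θ)
    ((by fun_prop : Continuous fun θ ↦ cos θ * cos (θ - α)).intervalIntegrable _ _)]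
  ring

lemma eqOn_max_cos_mul_max_cos_sub {α : ℝ} (h0 : 0 ≤ α) (hπ : α ≤ π) :
    EqOn (fun θ ↦ max (cos θ) 0 * max (cos (θ - α)) 0)
      ((Ioo (α - π / 2) (π / 2)).indicator fun θ ↦ cos θ * cos (θ - α)) (Ioo (-π) π) := by
  rintro θ ⟨hθ₁, hθ₂⟩
  dsimp only
  by_cases hmem : θ ∈ Ioo (α - π / 2) (π / 2)
  · rw [indicator_of_mem hmem]
    obtain ⟨hm₁, hm₂⟩ := hmem
    rw [max_eq_left (cos_nonneg_of_mem_Icc ⟨by linarith, hm₂.le⟩),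
      max_eq_left (cos_nonneg_of_mem_Icc ⟨by linarith, by linarith⟩)]
  rw [indicator_of_notMem hmem]
  have hnonpos : cos θ ≤ 0 ∨ cos (θ - α) ≤ 0 := by
    rw [mem_Ioo, not_and_or, not_lt, not_lt] at hmem
    rcases le_or_gt (π / 2) |θ| with hθ | hθ
    · left
      rw [← cos_abs]
      exact cos_nonpos_of_pi_div_two_le_of_le hθ (by cases abs_cases θ <;> linarith)
    · right
      rw [← cos_neg, neg_sub]
      rw [abs_lt] at hθ
      exact cos_nonpos_of_pi_div_two_le_of_le (by cases hmem <;> linarith) (by linarith)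
  rcases hnonpos with h | h <;> simp [max_eq_right h]

lemma integral_Ioo_max_cos_mul_max_cos_sub {α : ℝ} (h0 : 0 ≤ α) (hπ : α ≤ π) :
    ∫ θ in Ioo (-π) π, max (cos θ) 0 * max (cos (θ - α)) 0 = ((π - α) * cos α + sin α) / 2 := by
  rw [setIntegral_congr_fun measurableSet_Ioo (eqOn_max_cos_mul_max_cos_sub h0 hπ),
    setIntegral_indicator measurableSet_Ioo,
    inter_eq_self_of_subset_right (Ioo_subset_Ioo (by linarith) (by linarith)),
    ← integral_Ioc_eq_integral_Ioo, ← intervalIntegral.integral_of_le (by linarith),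
    integral_cos_mul_cos_sub, show 2 * (π / 2) - α = π - α by ring,
    show 2 * (α - π / 2) - α = α - π by ring, sin_pi_sub, sin_sub_pi]
  ring

lemma polar_integrand_max_mul_max_gaussian {r : ℝ} (hr : 0 ≤ r) (θ α : ℝ) :
    r * (gaussianPDFReal 0 1 (r * cos θ) * gaussianPDFReal 0 1 (r * sin θ) *
        (max (r * cos θ) 0 * max (cos α * (r * cos θ) + sin α * (r * sin θ)) 0))
      = r ^ 3 * exp (-r ^ 2 / 2) * ((2 * π)⁻¹ * (max (cos θ) 0 * max (cos (θ - α)) 0)) := by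
  have hrot : cos α * (r * cos θ) + sin α * (r * sin θ) = r * cos (θ - α) := by
    rw [cos_sub]; ring
  have hnorm : (r * cos θ) ^ 2 + (r * sin θ) ^ 2 = r ^ 2 := by
    linear_combination r ^ 2 * sin_sq_add_cos_sq θ
  rw [gaussianPDFReal_zero_one_mul, hnorm, hrot, max_mul_zero_of_nonneg hr,
    max_mul_zero_of_nonneg hr]
  ring

theorem stmt_5 (ρ : ℝ) (h1 : -1 ≤ ρ) (h2 : ρ ≤ 1) :
    ∫ p : ℝ × ℝ,
        max p.1 0 * max (ρ * p.1 + Real.sqrt (1 - ρ ^ 2) * p.2) 0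
        ∂((gaussianReal 0 1).prod (gaussianReal 0 1))
      = (Real.sqrt (1 - ρ ^ 2) + ρ * (π - Real.arccos ρ)) / (2 * π) := by
  set α := arccos ρ
  have hcos : cos α = ρ := cos_arccos h1 h2
  have hsin : sin α = √(1 - ρ ^ 2) := sin_arccos ρ
  rw [← hsin, ← hcos, integral_prod_gaussianReal one_ne_zero one_ne_zero,
    ← integral_comp_polarCoord_symm, polarCoord_target]
  simp only [polarCoord_symm_apply, smul_eq_mul]
  rw [setIntegral_congr_fun (measurableSet_Ioi.prod measurableSet_Ioo)
      fun q hq ↦ polar_integrand_max_mul_max_gaussian hq.1.le q.2 α,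
    Measure.volume_eq_prod, setIntegral_prod_mul (fun r ↦ r ^ 3 * exp (-r ^ 2 / 2))
      fun θ ↦ (2 * π)⁻¹ * (max (cos θ) 0 * max (cos (θ - α)) 0),
    integral_const_mul, integral_Ioi_pow_three_mul_exp_neg_sq_div_two,
    integral_Ioo_max_cos_mul_max_cos_sub (arccos_nonneg ρ) (arccos_le_pi ρ)]
  ring
end

section
/- Let A be an n × n real positive definite matrix, let Φ be an n × d real matrix, let c > 0 be a real number, and suppose that A - c · Φ Φᵀ is positive semidefinite. Then for every β ∈ ℝᵈ, writing y = Φ β, one has yᵀ A⁻¹ y ≤ ‖β‖² / c, where ‖β‖ is the Euclidean norm of β. -/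
/-!
Put `x = A⁻¹ y` and `u = Φᵀ x`. Then `yᵀ A⁻¹ y = xᵀ A x ≥ c ‖u‖²` by the domination hypothesis,
while also `yᵀ A⁻¹ y = xᵀ Φ β = ⟪u, β⟫ ≤ ‖u‖ ‖β‖`. The two bounds give `c ‖u‖ ≤ ‖β‖`, hence
`yᵀ A⁻¹ y ≤ ‖u‖ ‖β‖ ≤ ‖β‖² / c`.
-/

open Matrix
open scoped InnerProductSpace

theorem real_inner_le_norm_sq_div_of_mul_norm_sq_le {F : Type*} [NormedAddCommGroup F]
    [InnerProductSpace ℝ F] {u b : F} {c : ℝ} (hc : 0 < c) (h : c * ‖u‖ ^ 2 ≤ ⟪u, b⟫_ℝ) :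
    ⟪u, b⟫_ℝ ≤ ‖b‖ ^ 2 / c := by
  have hCS := real_inner_le_norm u b
  have hu : c * ‖u‖ ≤ ‖b‖ := by
    rcases (norm_nonneg u).eq_or_lt with hu0 | hu0
    · rw [← hu0, mul_zero]
      exact norm_nonneg b
    · exact le_of_mul_le_mul_right (by linarith) hu0
  rw [le_div_iff₀ hc]
  calc ⟪u, b⟫_ℝ * c ≤ ‖u‖ * ‖b‖ * c := mul_le_mul_of_nonneg_right hCS hc.le
    _ = c * ‖u‖ * ‖b‖ := by ring
    _ ≤ ‖b‖ * ‖b‖ := mul_le_mul_of_nonneg_right hu (norm_nonneg b)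
    _ = ‖b‖ ^ 2 := (sq _).symm

theorem Matrix.PosSemidef.mul_dotProduct_transpose_mulVec_le {m k : Type*} [Fintype m]
    [Fintype k] {A : Matrix m m ℝ} {Φ : Matrix m k ℝ} {c : ℝ}
    (h : (A - c • (Φ * Φᵀ)).PosSemidef) (x : m → ℝ) :
    c * (Φᵀ *ᵥ x ⬝ᵥ Φᵀ *ᵥ x) ≤ x ⬝ᵥ A *ᵥ x := by
  have hx := h.dotProduct_mulVec_nonneg x
  rwa [star_trivial, sub_mulVec, dotProduct_sub, smul_mulVec, dotProduct_smul, ← mulVec_mulVec,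
    dotProduct_mulVec x Φ, ← mulVec_transpose, smul_eq_mul, sub_nonneg] at hx

theorem stmt_11 (n d : ℕ) (A : Matrix (Fin n) (Fin n) ℝ) (hA : A.PosDef)
    (Φ : Matrix (Fin n) (Fin d) ℝ) (c : ℝ) (hc : 0 < c)
    (hdom : (A - c • (Φ * Φ.transpose)).PosSemidef)
    (β : EuclideanSpace ℝ (Fin d)) :
    (Φ *ᵥ β) ⬝ᵥ A⁻¹ *ᵥ (Φ *ᵥ β) ≤ ‖β‖ ^ 2 / c := by
  set x := A⁻¹ *ᵥ (Φ *ᵥ β)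
  set u : EuclideanSpace ℝ (Fin d) := WithLp.toLp 2 (Φᵀ *ᵥ x) with hu
  have hAx : A *ᵥ x = Φ *ᵥ β := by
    rw [mulVec_mulVec, mul_nonsing_inv A ((isUnit_iff_isUnit_det A).mp hA.isUnit), one_mulVec]
  have hform : (Φ *ᵥ β) ⬝ᵥ x = ⟪u, β⟫_ℝ := by
    rw [hu, EuclideanSpace.inner_toLp_toLp, star_trivial, dotProduct_comm, mulVec_transpose,
      dotProduct_mulVec, dotProduct_comm]
  have hnorm : ‖u‖ ^ 2 = Φᵀ *ᵥ x ⬝ᵥ Φᵀ *ᵥ x := by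
    rw [← real_inner_self_eq_norm_sq, hu, EuclideanSpace.inner_toLp_toLp, star_trivial]
  rw [hform]
  apply real_inner_le_norm_sq_div_of_mul_norm_sq_le hc
  rw [← hform, hnorm, dotProduct_comm (Φ *ᵥ β), ← hAx]
  exact hdom.mul_dotProduct_transpose_mulVec_le x
end

section
/- Let h_1, …, h_n ∈ ℝᵈ be unit vectors (‖h_i‖ = 1 for all i). Then the n × n real matrix with entries arcsin(⟨h_i, h_j⟩) is positive semidefinite, where ⟨·,·⟩ denotes the Euclidean inner product and arcsin the real inverse sine function on [-1,1]. -/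
open Matrix Real

open scoped ComplexOrder

/-!
For a positive semidefinite `A` with entries in `[-1, 1]`, set `q t = xᵀ arcsin(t A) x`. Then
`q 0 = 0` and, for `0 < t < 1`, `q' t = xᵀ (A ⊙ (1 - (tA) ⊙ (tA))^{∘ -1/2}) x`. The binomial series
`(1 - y)^{-1/2} = ∑ₖ C(k - 1/2, k) yᵏ` has nonnegative coefficients, so by the Schur product
theorem the entrywise image of a positive semidefinite matrix under it is positive semidefinite;
hence `q' ≥ 0`, `q` is monotone on `[0, 1]`, and `q 1 ≥ 0`. A Gram matrix of unit vectors is such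
an `A`. Working with the derivative avoids the convergence of the arcsin series at `±1`.
-/

theorem Ring.choose_pos_of_lt {R : Type*} [Field R] [LinearOrder R] [IsStrictOrderedRing R]
    {a : R} {n : ℕ} (h : (n : R) - 1 < a) : 0 < Ring.choose a n := by
  rw [Ring.choose_eq_smul, Polynomial.descPochhammer_smeval_eq_ascPochhammer,
    Polynomial.ascPochhammer_smeval_cast, Polynomial.ascPochhammer_smeval_eq_eval, smul_eq_mul]
  exact mul_pos (by positivity) (ascPochhammer_pos _ _ (by linarith))

theorem Real.hasSum_one_div_sqrt_one_sub {y : ℝ} (hy : |y| < 1) :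
    HasSum (fun n : ℕ => Ring.choose ((1 / 2 : ℝ) + n - 1) n * y ^ n) (1 / √(1 - y)) := by
  have hy' : y ∈ Metric.eball (0 : ℝ) 1 := by
    simpa [Metric.mem_eball, edist_dist, Real.dist_eq] using hy
  simpa [FormalMultilinearSeries.ofScalars_apply_eq, sqrt_eq_rpow, mul_comm] using
    (one_div_one_sub_rpow_hasFPowerSeriesOnBall_zero (1 / 2)).hasSum hy'

theorem Real.hasDerivAt_arcsin_mul_const {c t : ℝ} (h : |t * c| < 1) :
    HasDerivAt (fun s => arcsin (s * c)) (c * (1 / √(1 - t * c * (t * c)))) t := by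
  have := (hasDerivAt_arcsin (abs_lt.mp h).1.ne' (abs_lt.mp h).2.ne).comp t (hasDerivAt_mul_const c)
  rw [sq] at this
  rw [mul_comm c]
  exact this

namespace Matrix

variable {ι : Type*} [Fintype ι]

theorem PosSemidef.map_pow {𝕜 : Type*} [RCLike 𝕜] {A : Matrix ι ι 𝕜} (hA : A.PosSemidef) :
    ∀ k : ℕ, (A.map (· ^ k)).PosSemidef
  | 0 => by
    convert posSemidef_vecMulVec_self_star (1 : ι → 𝕜) using 1
    ext i j
    simp [vecMulVec_apply]
  | k + 1 => by
    convert (hA.map_pow k).hadamard hA using 1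
    ext i j
    simp [pow_succ]

theorem dotProduct_mulVec_self_eq_sum (M : Matrix ι ι ℝ) (x : ι → ℝ) :
    x ⬝ᵥ M *ᵥ x = ∑ i, ∑ j, x i * M i j * x j := by
  simp only [dotProduct, mulVec, Finset.mul_sum]
  exact Finset.sum_congr rfl fun i _ => Finset.sum_congr rfl fun j _ => by ring

theorem PosSemidef.map_of_hasSum {A : Matrix ι ι ℝ} (hA : A.PosSemidef) {f : ℝ → ℝ}
    {a : ℕ → ℝ} (ha : ∀ k, 0 ≤ a k) (hf : ∀ i j, HasSum (fun k => a k * A i j ^ k) (f (A i j))) :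
    (A.map f).PosSemidef := by
  refine .of_dotProduct_mulVec_nonneg (hA.isHermitian.map f fun _ => by simp) fun x => ?_
  have hsum : HasSum (fun k => a k * (x ⬝ᵥ A.map (· ^ k) *ᵥ x)) (x ⬝ᵥ A.map f *ᵥ x) := by
    simp only [dotProduct_mulVec_self_eq_sum, map_apply, Finset.mul_sum]
    refine hasSum_sum fun i _ => hasSum_sum fun j _ => ?_
    exact (((hf i j).mul_left (x i)).mul_right (x j)).congr_fun fun k => by ring
  exact hsum.nonneg fun k => mul_nonneg (ha k) ((hA.map_pow k).dotProduct_mulVec_nonneg x)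

theorem PosSemidef.map_one_div_sqrt_one_sub {A : Matrix ι ι ℝ} (hA : A.PosSemidef)
    (h1 : ∀ i j, |A i j| < 1) : (A.map fun y => 1 / √(1 - y)).PosSemidef :=
  hA.map_of_hasSum (fun k => (Ring.choose_pos_of_lt (by linarith)).le)
    fun i j => hasSum_one_div_sqrt_one_sub (h1 i j)

theorem hasDerivAt_dotProduct_map_arcsin_smul {A : Matrix ι ι ℝ} (x : ι → ℝ) {t : ℝ}
    (h1 : ∀ i j, |t * A i j| < 1) :
    HasDerivAt (fun s => x ⬝ᵥ (s • A).map arcsin *ᵥ x)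
      (x ⬝ᵥ (A ⊙ ((t • A) ⊙ (t • A)).map fun y => 1 / √(1 - y)) *ᵥ x) t := by
  simp only [dotProduct_mulVec_self_eq_sum, map_apply, hadamard_apply, smul_apply, smul_eq_mul]
  exact HasDerivAt.fun_sum fun i _ => HasDerivAt.fun_sum fun j _ =>
    ((hasDerivAt_arcsin_mul_const (h1 i j)).const_mul (x i)).mul_const (x j)

theorem PosSemidef.map_arcsin {A : Matrix ι ι ℝ} (hA : A.PosSemidef) (h1 : ∀ i j, |A i j| ≤ 1) :
    (A.map arcsin).PosSemidef := by
  refine .of_dotProduct_mulVec_nonneg (hA.isHermitian.map arcsin fun _ => by simp) fun x => ?_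
  have hlt : ∀ t ∈ Set.Ioo (0 : ℝ) 1, ∀ i j, |t * A i j| < 1 := fun t ht i j => by
    rw [abs_mul, abs_of_pos ht.1]
    exact (mul_le_of_le_one_right ht.1.le (h1 i j)).trans_lt ht.2
  have hmono : MonotoneOn (fun s : ℝ => x ⬝ᵥ (s • A).map arcsin *ᵥ x) (Set.Icc 0 1) := by
    refine monotoneOn_of_hasDerivWithinAt_nonneg (convex_Icc 0 1)
      (f' := fun t => x ⬝ᵥ (A ⊙ ((t • A) ⊙ (t • A)).map fun y => 1 / √(1 - y)) *ᵥ x) ?_ ?_ ?_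
    · refine Continuous.continuousOn ?_
      simp only [dotProduct_mulVec_self_eq_sum, map_apply, smul_apply, smul_eq_mul]
      fun_prop
    · rw [interior_Icc]
      exact fun t ht => (hasDerivAt_dotProduct_map_arcsin_smul x (hlt t ht)).hasDerivWithinAt
    · rw [interior_Icc]
      intro t ht
      refine (hA.hadamard (PosSemidef.map_one_div_sqrt_one_sub ?_ ?_)).dotProduct_mulVec_nonneg x
      · exact (hA.smul ht.1.le).hadamard (hA.smul ht.1.le)
      · intro i j
        simpa [abs_mul] using
          mul_lt_one_of_nonneg_of_lt_one_left (abs_nonneg _) (hlt t ht i j) (hlt t ht i j).le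
  simpa using hmono (by simp) (by simp) zero_le_one

end Matrix

theorem stmt_13 (n d : ℕ) (h : Fin n → EuclideanSpace ℝ (Fin d))
    (hunit : ∀ i, ‖h i‖ = 1) :
    (Matrix.of fun i j => Real.arcsin (inner ℝ (h i) (h j) : ℝ)).PosSemidef := by
  refine (posSemidef_gram ℝ h).map_arcsin fun i j => ?_
  simpa [hunit] using abs_real_inner_le_norm (h i) (h j)
end

section
/- Let h_1, …, h_n ∈ ℝᵈ be unit vectors, set ρ_{ij} = ⟨h_i, h_j⟩, and let Θ' be the n × n matrix with entries Θ'_{ij} = ρ_{ij} · (π - arccos ρ_{ij})/(2π). Assume Θ' is positive definite, let B be any n × n positive semidefinite matrix, and set Θ = Θ' + B. Fix a natural number L ≥ 1, reals α₁, α₂, α₄, …, α_{2L}, and vectors β₁, β₂, β₄, …, β_{2L} ∈ ℝᵈ, and define the label vector y ∈ ℝⁿ by y_i = α₁⟨h_i, β₁⟩ + ∑_{l=1}^{L} α_{2l}⟨h_i, β_{2l}⟩^{2l}. Then √(yᵀ Θ⁻¹ y) ≤ 2|α₁|·‖β₁‖ + ∑_{l=1}^{L} √(2π)·(2l - 1)·|α_{2l}|·‖β_{2l}‖^{2l}.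 -/
/-!
Since `arccos ρ = π / 2 - arcsin ρ`, the kernel entry is `ρ / 4 + ρ arcsin ρ / (2π)`, and the
Taylor series `arcsin ρ = ∑ C(2k, k) / 4ᵏ · ρ^(2k+1) / (2k+1)` has coefficients
`aₖ ≥ 1 / (2k+1)² > 0`. With tensor powers, `⟪u, v⟫ᵐ = ⟪u^⊗m, v^⊗m⟫`, so
`zᵀΘ'z = ‖∑ zᵢ hᵢ‖² / 4 + ∑ₖ aₖ / (2π) · ‖∑ zᵢ hᵢ^⊗(2k+2)‖²` bounds each of these norms by
`√(zᵀΘz)`, and Cauchy–Schwarz against `β^⊗m` gives `zᵀy ≤ D · √(zᵀΘz)` for every `z`, where `D`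
is the right-hand side. Taking `z = Θ⁻¹y` yields `√(yᵀΘ⁻¹y) ≤ D`.
-/

open Matrix Real Set

noncomputable def invSqrtCoeff (k : ℕ) : ℝ := k.centralBinom / 4 ^ k

noncomputable def arcsinCoeff (k : ℕ) : ℝ := invSqrtCoeff k / (2 * k + 1)

lemma invSqrtCoeff_pos (k : ℕ) : 0 < invSqrtCoeff k :=
  div_pos (mod_cast k.centralBinom_pos) (by positivity)

lemma invSqrtCoeff_le_one (k : ℕ) : invSqrtCoeff k ≤ 1 :=
  div_le_one_of_le₀ (mod_cast k.centralBinom_le_four_pow) (by positivity)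

lemma invSqrtCoeff_zero : invSqrtCoeff 0 = 1 := by simp [invSqrtCoeff]

lemma invSqrtCoeff_succ (k : ℕ) :
    invSqrtCoeff (k + 1) * (2 * k + 2) = invSqrtCoeff k * (2 * k + 1) := by
  have h : ((k + 1 : ℕ) : ℝ) * (k + 1).centralBinom = 2 * (2 * k + 1) * k.centralBinom := by
    exact_mod_cast k.succ_mul_centralBinom_succ
  simp only [invSqrtCoeff, pow_succ]
  field_simp
  push_cast at h
  linear_combination 2 * h

lemma one_le_mul_invSqrtCoeff (k : ℕ) : 1 ≤ (2 * k + 1) * invSqrtCoeff k := by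
  rcases Nat.eq_zero_or_pos k with rfl | hk
  · simp [invSqrtCoeff_zero]
  · have h : ((4 ^ k : ℕ) : ℝ) ≤ (2 * k * k.centralBinom : ℕ) :=
      mod_cast Nat.four_pow_le_two_mul_self_mul_centralBinom k hk
    rw [invSqrtCoeff, mul_div_assoc', le_div_iff₀ (by positivity)]
    push_cast at h
    nlinarith [(k.centralBinom_pos : 0 < k.centralBinom)]

lemma factorial_mul_invSqrtCoeff (k : ℕ) :
    k.factorial * invSqrtCoeff k = (ascPochhammer ℝ k).eval (1 / 2) := by
  induction k with
  | zero => simp [invSqrtCoeff_zero]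
  | succ k ih =>
    rw [ascPochhammer_succ_eval, ← ih, Nat.factorial_succ]
    push_cast
    linear_combination (k.factorial : ℝ) / 2 * invSqrtCoeff_succ k

lemma choose_eq_invSqrtCoeff (k : ℕ) : Ring.choose ((1 / 2 : ℝ) + k - 1) k = invSqrtCoeff k := by
  have h := Ring.factorial_nsmul_multichoose_eq_ascPochhammer (1 / 2 : ℝ) k
  rw [Ring.multichoose_eq, nsmul_eq_mul, Polynomial.ascPochhammer_smeval_eq_eval,
    ← factorial_mul_invSqrtCoeff] at h
  exact mul_left_cancel₀ (by positivity) h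

lemma hasSum_invSqrtCoeff_mul_pow {x : ℝ} (hx : |x| < 1) :
    HasSum (fun k => invSqrtCoeff k * x ^ (2 * k)) (1 / √(1 - x ^ 2)) := by
  have hx2 : x ^ 2 ∈ Metric.eball (0 : ℝ) 1 := by
    have : ‖x‖₊ < 1 := by rwa [← NNReal.coe_lt_one, coe_nnnorm, Real.norm_eq_abs]
    simpa [enorm_eq_nnnorm] using pow_lt_one₀ zero_le (ENNReal.coe_lt_one_iff.2 this) two_ne_zero
  have := (one_div_one_sub_rpow_hasFPowerSeriesOnBall_zero (1 / 2)).hasSum hx2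
  rw [FormalMultilinearSeries.ofScalars_apply_eq', zero_add, ← Real.sqrt_eq_rpow] at this
  simpa only [choose_eq_invSqrtCoeff, smul_eq_mul, pow_mul] using this

lemma arcsinCoeff_pos (k : ℕ) : 0 < arcsinCoeff k :=
  div_pos (invSqrtCoeff_pos k) (by positivity)

lemma one_le_sq_mul_arcsinCoeff (k : ℕ) : 1 ≤ (2 * k + 1) ^ 2 * arcsinCoeff k := by
  rw [arcsinCoeff, sq, mul_assoc, mul_div_cancel₀ _ (by positivity)]
  exact one_le_mul_invSqrtCoeff k

-- Telescoping: `arcsinCoeff k ≤ 2 (invSqrtCoeff k - invSqrtCoeff (k + 1))`.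
lemma summable_arcsinCoeff : Summable arcsinCoeff := by
  refine summable_of_sum_range_le (c := 2) (fun k => (arcsinCoeff_pos k).le) fun N => ?_
  have hle : ∀ k, arcsinCoeff k ≤ 2 * (invSqrtCoeff k - invSqrtCoeff (k + 1)) := fun k => by
    have h := invSqrtCoeff_succ k
    have hk : (0 : ℝ) ≤ k := k.cast_nonneg
    rw [arcsinCoeff, div_le_iff₀ (by positivity)]
    nlinarith [invSqrtCoeff_pos k, invSqrtCoeff_pos (k + 1)]
  calc ∑ k ∈ Finset.range N, arcsinCoeff k
      ≤ 2 * ∑ k ∈ Finset.range N, (invSqrtCoeff k - invSqrtCoeff (k + 1)) := by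
        rw [Finset.mul_sum]; exact Finset.sum_le_sum fun k _ => hle k
    _ ≤ 2 := by
        rw [Finset.sum_range_sub', invSqrtCoeff_zero]
        linarith [invSqrtCoeff_pos N]

lemma hasDerivAt_tsum_arcsinCoeff {x : ℝ} (hx : |x| < 1) :
    HasDerivAt (fun t => ∑' k, arcsinCoeff k * t ^ (2 * k + 1)) (1 / √(1 - x ^ 2)) x := by
  obtain ⟨r, hxr, hr1⟩ := exists_between hx
  have hr0 : 0 < r := (abs_nonneg x).trans_lt hxr
  rw [← (hasSum_invSqrtCoeff_mul_pow hx).tsum_eq]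
  refine hasDerivAt_tsum_of_isPreconnected (u := fun k => (r ^ 2) ^ k)
    (g := fun k t => arcsinCoeff k * t ^ (2 * k + 1))
    (g' := fun k t => invSqrtCoeff k * t ^ (2 * k))
    (summable_geometric_of_lt_one (by positivity) (by nlinarith)) isOpen_Ioo
    isPreconnected_Ioo (fun k y _ => ?_) (fun k y hy => ?_) (mem_Ioo.2 ⟨neg_lt_zero.2 hr0, hr0⟩)
    ?_ (abs_lt.1 hxr)
  · refine ((hasDerivAt_pow (2 * k + 1) y).const_mul (arcsinCoeff k)).congr_deriv ?_
    rw [Nat.add_sub_cancel, arcsinCoeff]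
    push_cast
    field_simp
  · have hy : |y| ≤ r := (abs_lt.2 hy).le
    rw [Real.norm_eq_abs, abs_mul, abs_of_pos (invSqrtCoeff_pos k), abs_pow, ← pow_mul]
    exact (mul_le_of_le_one_left (by positivity) (invSqrtCoeff_le_one k)).trans
      (pow_le_pow_left₀ (abs_nonneg y) hy _)
  · simp

/- Differentiating termwise gives the binomial series of `(1 - t ^ 2) ^ (-1 / 2)`, so the series
agrees with `arcsin` on `(-1, 1)`; it converges uniformly on `[-1, 1]`, hence also at `±1`. -/
lemma hasSum_arcsin {x : ℝ} (hx : |x| ≤ 1) :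
    HasSum (fun k => arcsinCoeff k * x ^ (2 * k + 1)) (arcsin x) := by
  have hbound : ∀ k, ∀ t ∈ Icc (-1 : ℝ) 1, ‖arcsinCoeff k * t ^ (2 * k + 1)‖ ≤ arcsinCoeff k :=
    fun k t ht => by
      rw [norm_mul, norm_pow, Real.norm_of_nonneg (arcsinCoeff_pos k).le]
      exact mul_le_of_le_one_right (arcsinCoeff_pos k).le
        (pow_le_one₀ (norm_nonneg t) (abs_le.2 ht))
  have hx' : x ∈ Icc (-1) 1 := abs_le.1 hx
  suffices EqOn (fun t => ∑' k, arcsinCoeff k * t ^ (2 * k + 1)) arcsin (Icc (-1) 1) from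
    this hx' ▸ (summable_arcsinCoeff.of_norm_bounded (hbound · x hx')).hasSum
  have hderiv : ∀ t ∈ Ioo (-1 : ℝ) 1,
      HasDerivAt (fun t => ∑' k, arcsinCoeff k * t ^ (2 * k + 1)) (1 / √(1 - t ^ 2)) t ∧
      HasDerivAt arcsin (1 / √(1 - t ^ 2)) t := fun t ht =>
    ⟨hasDerivAt_tsum_arcsinCoeff (abs_lt.2 ht), hasDerivAt_arcsin ht.1.ne' ht.2.ne⟩
  have hopen : EqOn (fun t => ∑' k, arcsinCoeff k * t ^ (2 * k + 1)) arcsin (Ioo (-1) 1) :=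
    isOpen_Ioo.eqOn_of_deriv_eq isPreconnected_Ioo
      (fun t ht => (hderiv t ht).1.differentiableAt.differentiableWithinAt)
      (fun t ht => (hderiv t ht).2.differentiableAt.differentiableWithinAt)
      (fun t ht => by rw [(hderiv t ht).1.deriv, (hderiv t ht).2.deriv])
      (by norm_num : (0 : ℝ) ∈ Ioo (-1) 1) (by simp)
  refine hopen.of_subset_closure (continuousOn_tsum (fun k => by fun_prop) summable_arcsinCoeff
    hbound) continuous_arcsin.continuousOn Ioo_subset_Icc_self ?_
  rw [closure_Ioo (by norm_num)]

section TensorPower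

variable {ι : Type*} [Fintype ι]

noncomputable def tensorPow (m : ℕ) (v : EuclideanSpace ℝ ι) : EuclideanSpace ℝ (Fin m → ι) :=
  WithLp.toLp 2 fun f => ∏ t, v (f t)

lemma inner_tensorPow (m : ℕ) (u v : EuclideanSpace ℝ ι) :
    inner ℝ (tensorPow m u) (tensorPow m v) = (inner ℝ u v) ^ m := by
  simp only [tensorPow, EuclideanSpace.inner_eq_star_dotProduct, dotProduct, star_trivial,
    ← Finset.prod_mul_distrib]
  rw [← Fin.prod_const, Fintype.prod_sum]

lemma norm_tensorPow (m : ℕ) (v : EuclideanSpace ℝ ι) : ‖tensorPow m v‖ = ‖v‖ ^ m := by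
  rw [norm_eq_sqrt_real_inner, inner_tensorPow, real_inner_self_eq_norm_sq, ← pow_mul,
    pow_mul', Real.sqrt_sq (by positivity)]

end TensorPower

lemma sum_sum_mul_inner_eq_norm_sq {E ι : Type*} [NormedAddCommGroup E] [InnerProductSpace ℝ E]
    [Fintype ι] (v : ι → E) (z : ι → ℝ) :
    ∑ i, ∑ j, z i * z j * inner ℝ (v i) (v j) = ‖∑ i, z i • v i‖ ^ 2 := by
  simp only [← real_inner_self_eq_norm_sq, sum_inner, inner_sum, real_inner_smul_left,
    real_inner_smul_right]
  refine Finset.sum_congr rfl fun i _ => Finset.sum_congr rfl fun j _ => by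
    rw [real_inner_comm]; ring

lemma dotProduct_mulVec_eq_sum_sum {n : Type*} [Fintype n] (M : Matrix n n ℝ) (z : n → ℝ) :
    z ⬝ᵥ M *ᵥ z = ∑ i, ∑ j, z i * z j * M i j := by
  simp only [dotProduct, Matrix.mulVec, Finset.mul_sum]
  exact Finset.sum_congr rfl fun i _ => Finset.sum_congr rfl fun j _ => by ring

lemma le_mul_sqrt_of_sq_le {a c q : ℝ} (ha : 0 ≤ a) (hc : 0 ≤ c) (h : a ^ 2 ≤ c ^ 2 * q) :
    a ≤ c * √q := by
  rw [← Real.sqrt_sq ha, ← Real.sqrt_sq hc, ← Real.sqrt_mul (sq_nonneg c)]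
  exact Real.sqrt_le_sqrt h

lemma sqrt_dotProduct_inv_mulVec_le {n : Type*} [Fintype n] [DecidableEq n]
    {Θ : Matrix n n ℝ} (hΘ : IsUnit Θ.det) {y : n → ℝ} {D : ℝ} (hD : 0 ≤ D)
    (hy : ∀ z, z ⬝ᵥ y ≤ D * √(z ⬝ᵥ Θ *ᵥ z)) : √(y ⬝ᵥ Θ⁻¹ *ᵥ y) ≤ D := by
  set q := y ⬝ᵥ Θ⁻¹ *ᵥ y
  have hq : Θ⁻¹ *ᵥ y ⬝ᵥ Θ *ᵥ (Θ⁻¹ *ᵥ y) = q := by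
    rw [mulVec_mulVec, mul_nonsing_inv _ hΘ, one_mulVec, dotProduct_comm]
  have hqD : q ≤ D * √q := by
    simpa only [hq, dotProduct_comm (Θ⁻¹ *ᵥ y)] using hy (Θ⁻¹ *ᵥ y)
  rcases le_or_gt q 0 with hq0 | hq0
  · rwa [Real.sqrt_eq_zero'.2 hq0]
  · have := Real.sqrt_pos.2 hq0
    nlinarith [Real.mul_self_sqrt hq0.le]

section ArcCosKernel

variable {n κ : Type*} [Fintype n] [Fintype κ]

noncomputable def tensorPowComb (m : ℕ) (h : n → EuclideanSpace ℝ κ) (z : n → ℝ) :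
    EuclideanSpace ℝ (Fin m → κ) :=
  ∑ i, z i • tensorPow m (h i)

lemma norm_sq_tensorPowComb (m : ℕ) (h : n → EuclideanSpace ℝ κ) (z : n → ℝ) :
    ‖tensorPowComb m h z‖ ^ 2 = ∑ i, ∑ j, z i * z j * inner ℝ (h i) (h j) ^ m := by
  simp only [tensorPowComb, ← sum_sum_mul_inner_eq_norm_sq, inner_tensorPow]

lemma abs_sum_mul_inner_pow_le (m : ℕ) (h : n → EuclideanSpace ℝ κ) (z : n → ℝ)
    (β : EuclideanSpace ℝ κ) :
    |∑ i, z i * inner ℝ (h i) β ^ m| ≤ ‖tensorPowComb m h z‖ * ‖β‖ ^ m := by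
  have : ∑ i, z i * inner ℝ (h i) β ^ m = inner ℝ (tensorPowComb m h z) (tensorPow m β) := by
    simp only [tensorPowComb, sum_inner, real_inner_smul_left, inner_tensorPow]
  rw [this, ← norm_tensorPow]
  exact abs_real_inner_le_norm _ _

lemma mul_sum_mul_inner_pow_le {m : ℕ} {h : n → EuclideanSpace ℝ κ} {z : n → ℝ} {c s : ℝ}
    (a : ℝ) (β : EuclideanSpace ℝ κ) (hu : ‖tensorPowComb m h z‖ ≤ c * s) :
    a * ∑ i, z i * inner ℝ (h i) β ^ m ≤ c * |a| * ‖β‖ ^ m * s := by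
  refine (le_abs_self _).trans ?_
  rw [abs_mul]
  calc |a| * |∑ i, z i * inner ℝ (h i) β ^ m| ≤ |a| * (c * s * ‖β‖ ^ m) := by
        gcongr
        exact (abs_sum_mul_inner_pow_le m h z β).trans
          (mul_le_mul_of_nonneg_right hu (by positivity))
    _ = c * |a| * ‖β‖ ^ m * s := by ring

noncomputable def arcCosKernel (h : n → EuclideanSpace ℝ κ) : Matrix n n ℝ :=
  Matrix.of fun i j =>
    inner ℝ (h i) (h j) * (π - arccos (inner ℝ (h i) (h j))) / (2 * π)

lemma hasSum_arcCosKernel {h : n → EuclideanSpace ℝ κ} (hh : ∀ i, ‖h i‖ ≤ 1) (z : n → ℝ) :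
    HasSum (fun k => arcsinCoeff k / (2 * π) * ‖tensorPowComb (2 * k + 2) h z‖ ^ 2)
      (z ⬝ᵥ arcCosKernel h *ᵥ z - ‖tensorPowComb 1 h z‖ ^ 2 / 4) := by
  have hρ : ∀ i j, |inner ℝ (h i) (h j)| ≤ 1 := fun i j =>
    (abs_real_inner_le_norm _ _).trans (mul_le_one₀ (hh i) (norm_nonneg _) (hh j))
  have hentry : ∀ i j, HasSum
      (fun k => z i * z j * (arcsinCoeff k / (2 * π) * inner ℝ (h i) (h j) ^ (2 * k + 2)))
      (z i * z j * (arcCosKernel h i j - inner ℝ (h i) (h j) ^ 1 / 4)) := fun i j => by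
    have hval : z i * z j * (arcCosKernel h i j - inner ℝ (h i) (h j) ^ 1 / 4)
        = z i * z j * inner ℝ (h i) (h j) / (2 * π) * arcsin (inner ℝ (h i) (h j)) := by
      simp only [arcCosKernel, Matrix.of_apply, arccos_eq_pi_div_two_sub_arcsin]
      field_simp
      ring
    rw [hval]
    exact ((hasSum_arcsin (hρ i j)).mul_left _).congr_fun fun k => by ring
  convert hasSum_sum fun i _ => hasSum_sum fun j _ => hentry i j using 1
  · ext k
    simp only [norm_sq_tensorPowComb, Finset.mul_sum]
    exact Finset.sum_congr rfl fun i _ => Finset.sum_congr rfl fun j _ => by ring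
  · simp only [dotProduct_mulVec_eq_sum_sum, norm_sq_tensorPowComb, Finset.sum_div,
      ← Finset.sum_sub_distrib, mul_sub, mul_div_assoc]

lemma norm_tensorPowComb_one_le {h : n → EuclideanSpace ℝ κ} (hh : ∀ i, ‖h i‖ ≤ 1)
    (z : n → ℝ) : ‖tensorPowComb 1 h z‖ ≤ 2 * √(z ⬝ᵥ arcCosKernel h *ᵥ z) := by
  have := (hasSum_arcCosKernel hh z).nonneg fun k => by
    have := arcsinCoeff_pos k
    positivity
  exact le_mul_sqrt_of_sq_le (norm_nonneg _) zero_le_two (by linarith)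

lemma norm_tensorPowComb_two_mul_le {h : n → EuclideanSpace ℝ κ} (hh : ∀ i, ‖h i‖ ≤ 1)
    (z : n → ℝ) {l : ℕ} (hl : 1 ≤ l) :
    ‖tensorPowComb (2 * l) h z‖ ≤ √(2 * π) * (2 * l - 1) * √(z ⬝ᵥ arcCosKernel h *ᵥ z) := by
  obtain ⟨k, rfl⟩ : ∃ k, l = k + 1 := ⟨l - 1, by omega⟩
  have hterm_nonneg : ∀ j, 0 ≤ arcsinCoeff j / (2 * π) * ‖tensorPowComb (2 * j + 2) h z‖ ^ 2 :=
    fun j => by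
      have := arcsinCoeff_pos j
      positivity
  have hk := le_hasSum (hasSum_arcCosKernel hh z) k fun j _ => hterm_nonneg j
  rw [div_mul_eq_mul_div, div_le_iff₀ (by positivity)] at hk
  set u := tensorPowComb (2 * k + 2) h z
  set Q := z ⬝ᵥ arcCosKernel h *ᵥ z
  have hl : (2 * ((k + 1 : ℕ) : ℝ) - 1) = 2 * k + 1 := by push_cast; ring
  rw [hl, show 2 * (k + 1) = 2 * k + 2 by ring]
  refine le_mul_sqrt_of_sq_le (norm_nonneg _) (by positivity) ?_
  calc ‖u‖ ^ 2 ≤ (2 * k + 1) ^ 2 * arcsinCoeff k * ‖u‖ ^ 2 :=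
        le_mul_of_one_le_left (sq_nonneg _) (one_le_sq_mul_arcsinCoeff k)
    _ ≤ (2 * k + 1) ^ 2 * ((Q - ‖tensorPowComb 1 h z‖ ^ 2 / 4) * (2 * π)) := by
        rw [mul_assoc]; exact mul_le_mul_of_nonneg_left hk (sq_nonneg _)
    _ ≤ (√(2 * π) * (2 * k + 1)) ^ 2 * Q := by
        rw [mul_pow, Real.sq_sqrt (by positivity)]
        nlinarith [mul_nonneg (mul_nonneg (sq_nonneg (2 * k + 1 : ℝ))
          (sq_nonneg ‖tensorPowComb 1 h z‖)) Real.pi_pos.le]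

lemma dotProduct_le_mul_sqrt_arcCosKernel {h : n → EuclideanSpace ℝ κ} (hh : ∀ i, ‖h i‖ ≤ 1)
    (L : ℕ) (α : ℕ → ℝ) (β : ℕ → EuclideanSpace ℝ κ) (z : n → ℝ) :
    z ⬝ᵥ (fun i => α 1 * inner ℝ (h i) (β 1)
        + ∑ l ∈ Finset.Icc 1 L, α (2 * l) * inner ℝ (h i) (β (2 * l)) ^ (2 * l))
      ≤ (2 * |α 1| * ‖β 1‖
          + ∑ l ∈ Finset.Icc 1 L,
              √(2 * π) * (2 * (l : ℝ) - 1) * |α (2 * l)| * ‖β (2 * l)‖ ^ (2 * l))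
        * √(z ⬝ᵥ arcCosKernel h *ᵥ z) := by
  have hexpand : z ⬝ᵥ (fun i => α 1 * inner ℝ (h i) (β 1)
        + ∑ l ∈ Finset.Icc 1 L, α (2 * l) * inner ℝ (h i) (β (2 * l)) ^ (2 * l))
      = α 1 * ∑ i, z i * inner ℝ (h i) (β 1) ^ 1
        + ∑ l ∈ Finset.Icc 1 L, α (2 * l) * ∑ i, z i * inner ℝ (h i) (β (2 * l)) ^ (2 * l) := by
    simp only [dotProduct, mul_add, Finset.sum_add_distrib, Finset.mul_sum, pow_one]
    rw [Finset.sum_comm (s := Finset.univ)]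
    congr 1 <;> simp only [mul_left_comm]
  rw [hexpand, add_mul, Finset.sum_mul]
  refine add_le_add ?_ (Finset.sum_le_sum fun l hl => ?_)
  · simpa only [pow_one] using mul_sum_mul_inner_pow_le (α 1) (β 1) (norm_tensorPowComb_one_le hh z)
  · exact mul_sum_mul_inner_pow_le _ _
      (norm_tensorPowComb_two_mul_le hh z (Finset.mem_Icc.1 hl).1)

end ArcCosKernel

theorem stmt_16_general (n d : ℕ) (h : Fin n → EuclideanSpace ℝ (Fin d))
    (hunit : ∀ i, ‖h i‖ = 1)
    (Θ' : Matrix (Fin n) (Fin n) ℝ)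
    (hΘ'def : Θ' = Matrix.of fun i j =>
        (inner ℝ (h i) (h j) : ℝ)
          * (π - Real.arccos (inner ℝ (h i) (h j) : ℝ)) / (2 * π))
    (hΘ' : Θ'.PosDef)
    (B : Matrix (Fin n) (Fin n) ℝ) (hB : B.PosSemidef)
    (Θ : Matrix (Fin n) (Fin n) ℝ) (hΘ : Θ = Θ' + B)
    (L : ℕ)
    (α : ℕ → ℝ) (β : ℕ → EuclideanSpace ℝ (Fin d))
    (y : Fin n → ℝ)
    (hy : ∀ i, y i = α 1 * (inner ℝ (h i) (β 1) : ℝ)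
        + ∑ l ∈ Finset.Icc 1 L, α (2 * l) * (inner ℝ (h i) (β (2 * l)) : ℝ) ^ (2 * l)) :
    Real.sqrt (y ⬝ᵥ Θ⁻¹ *ᵥ y)
      ≤ 2 * |α 1| * ‖β 1‖
        + ∑ l ∈ Finset.Icc 1 L,
            Real.sqrt (2 * π) * (2 * (l : ℝ) - 1) * |α (2 * l)| * ‖β (2 * l)‖ ^ (2 * l) := by
  have hΘ'k : Θ' = arcCosKernel h := hΘ'def
  have hdet : IsUnit Θ.det := by
    rw [hΘ, ← isUnit_iff_isUnit_det]
    exact (hΘ'.add_posSemidef hB).isUnit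
  have hD : 0 ≤ 2 * |α 1| * ‖β 1‖ + ∑ l ∈ Finset.Icc 1 L,
      √(2 * π) * (2 * (l : ℝ) - 1) * |α (2 * l)| * ‖β (2 * l)‖ ^ (2 * l) := by
    refine add_nonneg (by positivity) (Finset.sum_nonneg fun l hl => ?_)
    have : (1 : ℝ) ≤ l := mod_cast (Finset.mem_Icc.1 hl).1
    have : (0 : ℝ) ≤ 2 * l - 1 := by linarith
    positivity
  refine sqrt_dotProduct_inv_mulVec_le hdet hD fun z => ?_
  have hB' : z ⬝ᵥ arcCosKernel h *ᵥ z ≤ z ⬝ᵥ Θ *ᵥ z := by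
    have hBz := hB.dotProduct_mulVec_nonneg z
    rw [star_trivial] at hBz
    rw [hΘ, add_mulVec, dotProduct_add, hΘ'k]
    linarith
  rw [show y = _ from funext hy]
  exact (dotProduct_le_mul_sqrt_arcCosKernel (fun i => (hunit i).le) L α β z).trans
    (mul_le_mul_of_nonneg_left (Real.sqrt_le_sqrt hB') hD)

theorem stmt_16 (n d : ℕ) (h : Fin n → EuclideanSpace ℝ (Fin d))
    (hunit : ∀ i, ‖h i‖ = 1)
    (Θ' : Matrix (Fin n) (Fin n) ℝ)
    (hΘ'def : Θ' = Matrix.of fun i j =>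
        (inner ℝ (h i) (h j) : ℝ)
          * (π - Real.arccos (inner ℝ (h i) (h j) : ℝ)) / (2 * π))
    (hΘ' : Θ'.PosDef)
    (B : Matrix (Fin n) (Fin n) ℝ) (hB : B.PosSemidef)
    (Θ : Matrix (Fin n) (Fin n) ℝ) (hΘ : Θ = Θ' + B)
    (L : ℕ) (hL : 1 ≤ L)
    (α : ℕ → ℝ) (β : ℕ → EuclideanSpace ℝ (Fin d))
    (y : Fin n → ℝ)
    (hy : ∀ i, y i = α 1 * (inner ℝ (h i) (β 1) : ℝ)
        + ∑ l ∈ Finset.Icc 1 L, α (2 * l) * (inner ℝ (h i) (β (2 * l)) : ℝ) ^ (2 * l)) :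
    Real.sqrt (y ⬝ᵥ Θ⁻¹ *ᵥ y)
      ≤ 2 * |α 1| * ‖β 1‖
        + ∑ l ∈ Finset.Icc 1 L,
            Real.sqrt (2 * π) * (2 * (l : ℝ) - 1) * |α (2 * l)| * ‖β (2 * l)‖ ^ (2 * l) :=
  stmt_16_general n d h hunit Θ' hΘ'def hΘ' B hB Θ hΘ L α β y hy
end
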